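/- (Inf–sup identity for the local problem) Let ω = (x₀,x₂) be a patch with interior vertex x₁, ψ the hat function of x₁, β ≠ 0 constant, and k' ≥ 0. For every continuous piecewise polynomial s of degree ≤ k' on the two subintervals of ω, sup over nonzero piecewise polynomials v of degree ≤ k' on ω of ( ∫_ω β(ψ s)' v ) / ‖v‖_{L²(ω)} = ‖β(ψ s)'‖_{L²(ω)}; i.e., the inf–sup constant of the local bilinear form equals 1. -/

import Mathlib

/-! On each piece `ψ` is affine, so `ψ s` has degree `≤ k' + 1` there and `g = β (ψ s)'` is again a
piecewise polynomial of degree `≤ k'`, i.e. an admissible test function. Cauchy–Schwarz bounds every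
quotient `(∫ g v) / ‖v‖` by `‖g‖`, and `v = g` attains the bound. -/

open MeasureTheory Set intervalIntegral

/-- The `L²` norm of `f` over the set `s ⊆ ℝ`. -/
noncomputable def L2N (f : ℝ → ℝ) (s : Set ℝ) : ℝ :=
  (eLpNorm f 2 (volume.restrict s)).toReal

/-- `v` belongs to `H¹(a,b)` with weak derivative `v'` : the derivative is
square-integrable (hence integrable) on `(a,b)` and `v` is the primitive of `v'`
(continuous representative). -/
def IsH1 (a b : ℝ) (v v' : ℝ → ℝ) : Prop :=
  MemLp v' 2 (volume.restrict (Ioo a b)) ∧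
  IntervalIntegrable v' volume a b ∧
  ∀ x ∈ Icc a b, v x = v a + ∫ t in a..x, v' t

/-- The hat function of the interior vertex `x₁` of the patch `(x₀,x₂)`. -/
noncomputable def hat1 (x₀ x₁ x₂ t : ℝ) : ℝ :=
  if t ≤ x₁ then (t - x₀) / (x₁ - x₀) else (x₂ - t) / (x₂ - x₁)

/-- The (piecewise constant) derivative of the hat function. -/
noncomputable def hat1D (x₀ x₁ x₂ t : ℝ) : ℝ :=
  if t ≤ x₁ then 1 / (x₁ - x₀) else -(1 / (x₂ - x₁))

/-- `β (ψ s)'` for the continuous piecewise polynomial `s = (s₁, s₂)`. -/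
noncomputable def Gfun (x₀ x₁ x₂ β : ℝ) (s₁ s₂ : Polynomial ℝ) (t : ℝ) : ℝ :=
  β * (hat1D x₀ x₁ x₂ t * (if t ≤ x₁ then s₁ else s₂).eval t
    + hat1 x₀ x₁ x₂ t * (if t ≤ x₁ then s₁ else s₂).derivative.eval t)

open scoped ENNReal

section L2
variable {α : Type*} [MeasurableSpace α] {μ : Measure α} {f g : α → ℝ}

theorem integral_mul_eq_inner_toLp (hf : MemLp f 2 μ) (hg : MemLp g 2 μ) :
    ∫ x, f x * g x ∂μ = inner ℝ (hf.toLp f) (hg.toLp g) := by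
  rw [L2.inner_def]
  refine integral_congr_ae ?_
  filter_upwards [hf.coeFn_toLp, hg.coeFn_toLp] with x hfx hgx
  rw [hfx, hgx, real_inner_eq_re_inner, RCLike.inner_apply, conj_trivial, mul_comm]
  rfl

theorem integral_mul_le_eLpNorm_mul_eLpNorm (hf : MemLp f 2 μ) (hg : MemLp g 2 μ) :
    ∫ x, f x * g x ∂μ ≤ (eLpNorm f 2 μ).toReal * (eLpNorm g 2 μ).toReal := by
  rw [integral_mul_eq_inner_toLp hf hg, ← Lp.norm_toLp f hf, ← Lp.norm_toLp g hg]
  exact real_inner_le_norm _ _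

theorem integral_mul_self_eq_eLpNorm_sq (hf : MemLp f 2 μ) :
    ∫ x, f x * f x ∂μ = (eLpNorm f 2 μ).toReal ^ 2 := by
  rw [integral_mul_eq_inner_toLp hf hf, ← Lp.norm_toLp f hf, real_inner_self_eq_norm_sq]

end L2

theorem integral_mul_div_L2N_le {s : Set ℝ} {f g : ℝ → ℝ} (hf : MemLp f 2 (volume.restrict s))
    (hg : MemLp g 2 (volume.restrict s)) : (∫ t in s, f t * g t) / L2N g s ≤ L2N f s := by
  obtain hg0 | hg0 := (ENNReal.toReal_nonneg : 0 ≤ (eLpNorm g 2 (volume.restrict s)).toReal).eq_or_lt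
  · rw [L2N, ← hg0, div_zero]; exact ENNReal.toReal_nonneg
  · exact (div_le_iff₀ hg0).mpr (integral_mul_le_eLpNorm_mul_eLpNorm hf hg)

theorem integral_mul_self_div_L2N {s : Set ℝ} {f : ℝ → ℝ} (hf : MemLp f 2 (volume.restrict s)) :
    (∫ t in s, f t * f t) / L2N f s = L2N f s := by
  rw [integral_mul_self_eq_eLpNorm_sq hf, L2N]
  rcases eq_or_ne (eLpNorm f 2 (volume.restrict s)).toReal 0 with h0 | h0
  · rw [h0]; simp
  · field_simp

open Polynomial

theorem intervalIntegral_add_eq_setIntegral_Ioo_ite {a b c : ℝ} {f g : ℝ → ℝ}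
    (hab : a ≤ b) (hbc : b ≤ c)
    (hfg : IntegrableOn (fun t => if t ≤ b then f t else g t) (Ioo a c)) :
    (∫ t in a..b, f t) + ∫ t in b..c, g t = ∫ t in Ioo a c, if t ≤ b then f t else g t := by
  set h := fun t => if t ≤ b then f t else g t
  have hh : IntervalIntegrable h volume a c := by
    rw [intervalIntegrable_iff_integrableOn_Ioo_of_le (hab.trans hbc)]; exact hfg
  have hf : ∫ t in a..b, f t = ∫ t in a..b, h t :=
    integral_congr fun t ht => (if_pos (uIcc_of_le hab ▸ ht).2).symm
  have hg : ∫ t in b..c, g t = ∫ t in b..c, h t :=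
    integral_congr_ae (Filter.Eventually.of_forall fun t ht =>
      (if_neg (not_le.mpr (uIoc_of_le hbc ▸ ht).1)).symm)
  rw [hf, hg, integral_add_adjacent_intervals (hh.mono_set ?_) (hh.mono_set ?_),
    integral_of_le (hab.trans hbc), integral_Ioc_eq_integral_Ioo]
  · rw [uIcc_of_le hab, uIcc_of_le (hab.trans hbc)]; exact Icc_subset_Icc_right hbc
  · rw [uIcc_of_le hbc, uIcc_of_le (hab.trans hbc)]; exact Icc_subset_Icc_left hab

noncomputable def piecewisePoly (b : ℝ) (p q : ℝ[X]) (t : ℝ) : ℝ :=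
  if t ≤ b then p.eval t else q.eval t

theorem measurable_piecewisePoly (b : ℝ) (p q : ℝ[X]) : Measurable (piecewisePoly b p q) :=
  Measurable.ite (measurableSet_le measurable_id measurable_const)
    p.continuous.measurable q.continuous.measurable

theorem memLp_piecewisePoly (b : ℝ) (p q : ℝ[X]) (r : ℝ≥0∞) {s : Set ℝ} {a c : ℝ}
    (hs : s ⊆ Icc a c) : MemLp (piecewisePoly b p q) r (volume.restrict s) := by
  obtain ⟨C₁, hC₁⟩ := isCompact_Icc.exists_bound_of_continuousOn p.continuous.continuousOn
  obtain ⟨C₂, hC₂⟩ := isCompact_Icc.exists_bound_of_continuousOn q.continuous.continuousOn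
  refine (MemLp.of_bound (μ := volume.restrict (Icc a c))
    (measurable_piecewisePoly b p q).aestronglyMeasurable (max C₁ C₂) ?_).mono_measure
    (Measure.restrict_mono hs le_rfl)
  filter_upwards [ae_restrict_mem measurableSet_Icc] with t ht
  unfold piecewisePoly
  split_ifs
  · exact (hC₁ t ht).trans (le_max_left _ _)
  · exact (hC₂ t ht).trans (le_max_right _ _)

theorem natDegree_derivative_mul_le {R : Type*} [Semiring R] {ℓ p : R[X]} (hℓ : ℓ.natDegree ≤ 1) :
    (derivative (ℓ * p)).natDegree ≤ p.natDegree := by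
  have hder := natDegree_derivative_le (ℓ * p)
  have hmul := natDegree_mul_le (p := ℓ) (q := p)
  omega

noncomputable def hatLeft (x₀ x₁ : ℝ) : ℝ[X] := C (x₁ - x₀)⁻¹ * (X - C x₀)

noncomputable def hatRight (x₁ x₂ : ℝ) : ℝ[X] := C (x₂ - x₁)⁻¹ * (C x₂ - X)

theorem natDegree_hatLeft_le (x₀ x₁ : ℝ) : (hatLeft x₀ x₁).natDegree ≤ 1 := by
  unfold hatLeft; compute_degree

theorem natDegree_hatRight_le (x₁ x₂ : ℝ) : (hatRight x₁ x₂).natDegree ≤ 1 := by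
  unfold hatRight; compute_degree

theorem Gfun_eq_piecewisePoly (x₀ x₁ x₂ β : ℝ) (s₁ s₂ : ℝ[X]) :
    Gfun x₀ x₁ x₂ β s₁ s₂ = piecewisePoly x₁ (C β * derivative (hatLeft x₀ x₁ * s₁))
      (C β * derivative (hatRight x₁ x₂ * s₂)) := by
  funext t
  unfold Gfun hat1 hat1D piecewisePoly hatLeft hatRight
  split_ifs <;>
    simp only [derivative_mul, derivative_C, derivative_X, derivative_sub, eval_mul, eval_add,
      eval_sub, eval_C, eval_X, eval_neg, eval_one, zero_mul, zero_add, zero_sub, sub_zero,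
      mul_one] <;>
    ring

theorem degree_C_mul_derivative_mul_le {ℓ p : ℝ[X]} {n : ℕ} (c : ℝ) (hℓ : ℓ.natDegree ≤ 1)
    (hp : p.degree ≤ n) : (C c * derivative (ℓ * p)).degree ≤ n := by
  rw [← natDegree_le_iff_degree_le] at hp ⊢
  exact (natDegree_C_mul_le _ _).trans ((natDegree_derivative_mul_le hℓ).trans hp)

theorem local_inf_sup_identity_general (x₀ x₁ x₂ β : ℝ) (h01 : x₀ < x₁) (h12 : x₁ < x₂)
    (k' : ℕ) (s₁ s₂ : Polynomial ℝ)
    (hd1 : s₁.degree ≤ (k' : WithBot ℕ)) (hd2 : s₂.degree ≤ (k' : WithBot ℕ)) :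
    IsLUB {r : ℝ | ∃ v₁ v₂ : Polynomial ℝ,
        v₁.degree ≤ (k' : WithBot ℕ) ∧ v₂.degree ≤ (k' : WithBot ℕ) ∧
        (v₁ ≠ 0 ∨ v₂ ≠ 0) ∧
        r = ((∫ t in x₀..x₁, Gfun x₀ x₁ x₂ β s₁ s₂ t * v₁.eval t)
              + ∫ t in x₁..x₂, Gfun x₀ x₁ x₂ β s₁ s₂ t * v₂.eval t) /
            L2N (fun t => if t ≤ x₁ then v₁.eval t else v₂.eval t) (Ioo x₀ x₂)}
      (L2N (Gfun x₀ x₁ x₂ β s₁ s₂) (Ioo x₀ x₂)) := by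
  set G := Gfun x₀ x₁ x₂ β s₁ s₂
  set g₁ := C β * derivative (hatLeft x₀ x₁ * s₁)
  set g₂ := C β * derivative (hatRight x₁ x₂ * s₂)
  have hG : G = piecewisePoly x₁ g₁ g₂ := Gfun_eq_piecewisePoly x₀ x₁ x₂ β s₁ s₂
  have hL2 : ∀ p q : ℝ[X], MemLp (piecewisePoly x₁ p q) 2 (volume.restrict (Ioo x₀ x₂)) :=
    fun p q => memLp_piecewisePoly x₁ p q 2 Ioo_subset_Icc_self
  have hnum : ∀ v₁ v₂ : ℝ[X], ((∫ t in x₀..x₁, G t * v₁.eval t) + ∫ t in x₁..x₂, G t * v₂.eval t)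
      = ∫ t in Ioo x₀ x₂, G t * piecewisePoly x₁ v₁ v₂ t := fun v₁ v₂ => by
    have hint : IntegrableOn (fun t => G t * piecewisePoly x₁ v₁ v₂ t) (Ioo x₀ x₂) :=
      hG ▸ (hL2 g₁ g₂).integrable_mul (hL2 v₁ v₂)
    simp only [piecewisePoly, mul_ite] at hint ⊢
    exact intervalIntegral_add_eq_setIntegral_Ioo_ite h01.le h12.le hint
  refine IsGreatest.isLUB ⟨?_, ?_⟩
  · by_cases hg : g₁ = 0 ∧ g₂ = 0
    · have hG0 : G = 0 := by rw [hG, hg.1, hg.2]; funext t; simp [piecewisePoly]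
      have hone : (1 : ℝ[X]).degree ≤ k' := degree_one_le.trans (WithBot.coe_le_coe.mpr k'.zero_le)
      refine ⟨1, 1, hone, hone, Or.inl one_ne_zero, ?_⟩
      simp [hG0, L2N]
    · refine ⟨g₁, g₂, degree_C_mul_derivative_mul_le β (natDegree_hatLeft_le x₀ x₁) hd1,
        degree_C_mul_derivative_mul_le β (natDegree_hatRight_le x₁ x₂) hd2, not_and_or.mp hg, ?_⟩
      change L2N G _ = (_ + _) / L2N (piecewisePoly x₁ g₁ g₂) _
      rw [hnum, ← hG, integral_mul_self_div_L2N (hG ▸ hL2 g₁ g₂)]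
  · rintro r ⟨v₁, v₂, -, -, -, rfl⟩
    rw [hnum]
    exact integral_mul_div_L2N_le (hG ▸ hL2 g₁ g₂) (hL2 v₁ v₂)

/-- inf–sup identity for the local problem: the supremum over
nonzero piecewise polynomial test functions `v` of degree `≤ k'` of
`(∫_ω β (ψ s)' v) / ‖v‖_{L²(ω)}` equals `‖β (ψ s)'‖_{L²(ω)}`. -/
theorem local_inf_sup_identity (x₀ x₁ x₂ β : ℝ) (h01 : x₀ < x₁) (h12 : x₁ < x₂)
    (hβ : β ≠ 0) (k' : ℕ) (s₁ s₂ : Polynomial ℝ)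
    (hd1 : s₁.degree ≤ (k' : WithBot ℕ)) (hd2 : s₂.degree ≤ (k' : WithBot ℕ))
    (hcont : s₁.eval x₁ = s₂.eval x₁) :
    IsLUB {r : ℝ | ∃ v₁ v₂ : Polynomial ℝ,
        v₁.degree ≤ (k' : WithBot ℕ) ∧ v₂.degree ≤ (k' : WithBot ℕ) ∧
        (v₁ ≠ 0 ∨ v₂ ≠ 0) ∧
        r = ((∫ t in x₀..x₁, Gfun x₀ x₁ x₂ β s₁ s₂ t * v₁.eval t)
              + ∫ t in x₁..x₂, Gfun x₀ x₁ x₂ β s₁ s₂ t * v₂.eval t) /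
            L2N (fun t => if t ≤ x₁ then v₁.eval t else v₂.eval t) (Ioo x₀ x₂)}
      (L2N (Gfun x₀ x₁ x₂ β s₁ s₂) (Ioo x₀ x₂)) :=
  local_inf_sup_identity_general x₀ x₁ x₂ β h01 h12 k' s₁ s₂ hd1 hd2
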